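/- arXiv:1608.00917 — 2 statements merged into one kernel-verified Lean document; each statement's English description precedes it below -/
import Mathlib

section
/- There exist thresholds γ*_{i,k} > 0 (independent of the scaling factors) such that whenever 0 < γ^j_{i,k} < γ*_{i,k} for all i, all j ∈ 𝒩_i and all k ≥ 1, then for every k ≥ 1 with (η_{1,k−1|k−1},…,η_{N,k−1|k−1}) ≠ 0 the Lyapunov function V_k = Σ_{i=1}^N η_{i,k|k}^T Γ_{i,k|k}^{−1} η_{i,k|k} of the distributed local Kalman consensus filter satisfies V_k − V_{k−1} < −√2 · Σ_{î=1}^{N−1} γ^{î+1}_{î,k} · ‖u^{î+1}_{î,k}‖², where u^j_{i,k} = Î_{j,i}η_{j,k|k−1} − Î_{i,j}η_{i,k|k−1} is the neighbor disagreement and ‖·‖ is the Euclidean norm. -/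
/-!
Each agent's new error is `η' = F a + s`, where `a = Aη` is the predicted error,
`F = I - KH = Γ⁺(Γ⁻)⁻¹` and `s = Γ⁻c` is the consensus correction. Hence
`η'ᵀ(Γ⁺)⁻¹η' = (Fa)ᵀ(Γ⁺)⁻¹(Fa) + 2 cᵀa + sᵀ(Γ⁺)⁻¹s`.
* Kalman part: `(Fa)ᵀ(Γ⁺)⁻¹(Fa) ≤ aᵀ(Γ⁻)⁻¹a ≤ ηᵀΓ⁻¹η - wᵀQw` with `w = (Γ⁻)⁻¹a`, since
  `Γ⁺ ≤ Γ⁻ = AΓAᵀ + Q`; as `Q > 0` this is strict unless `η = 0`.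
* Cross terms: the two agents of an edge use the same scaling factor and opposite
  disagreements, so `Σᵢ 2 cᵢᵀaᵢ = -2 Σⱼ γⱼ ‖uⱼ‖²`.
* Quadratic terms are `O(γ²)‖u‖²`, hence at most `(2 - √2) Σⱼ γⱼ ‖uⱼ‖²` for `γ` below a
  threshold that depends on the covariances only.
-/

open Matrix Filter Finset

noncomputable section

/-- Loewner strict order `A < B`. -/
def loewnerLT {m : Type*} [Fintype m] (A B : Matrix m m ℝ) : Prop := (B - A).PosDef

/-- Loewner order `A ≤ B`. -/
def loewnerLE {m : Type*} [Fintype m] (A B : Matrix m m ℝ) : Prop := (B - A).PosSemidef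

/-- smallest (real) eigenvalue of a matrix -/
def lamMin {N : ℕ} (M : Matrix (Fin N) (Fin N) ℝ) : ℝ :=
  sInf {t : ℝ | ∃ v : Fin N → ℝ, v ≠ 0 ∧ M.mulVec v = t • v}

/-- largest (real) eigenvalue of a matrix -/
def lamMax {N : ℕ} (M : Matrix (Fin N) (Fin N) ℝ) : ℝ :=
  sSup {t : ℝ | ∃ v : Fin N → ℝ, v ≠ 0 ∧ M.mulVec v = t • v}

/-- spectral norm (ℓ²-operator norm) of a square matrix -/
def spectralNormMat {N : ℕ} (M : Matrix (Fin N) (Fin N) ℝ) : ℝ :=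
  ‖Matrix.toEuclideanCLM (𝕜 := ℝ) M‖

/-- largest singular value -/
def sigmaMax {N : ℕ} (M : Matrix (Fin N) (Fin N) ℝ) : ℝ := spectralNormMat M

/-- maximum absolute row-sum matrix norm -/
def rowSumNorm {m n : ℕ} (M : Matrix (Fin m) (Fin n) ℝ) : ℝ :=
  ⨆ i : Fin m, ∑ j, |M i j|

/-- Euclidean norm of a vector -/
def euclNorm {N : ℕ} (v : Fin N → ℝ) : ℝ := Real.sqrt (∑ j, (v j) ^ 2)

/-- the free-flow mode matrix A_FF -/
def matAFF (N : ℕ) (θv : ℝ) : Matrix (Fin N) (Fin N) ℝ :=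
  Matrix.of fun i j =>
    if (i : ℕ) = 0 ∧ (j : ℕ) = 0 then 1
    else if i = j then 1 - θv
    else if (i : ℕ) = (j : ℕ) + 1 then θv
    else 0

/-- the congestion mode matrix A_CC -/
def matACC (N : ℕ) (θw : ℝ) : Matrix (Fin N) (Fin N) ℝ :=
  Matrix.of fun i j =>
    if (i : ℕ) = N - 1 ∧ (j : ℕ) = N - 1 then 1
    else if i = j then 1 - θw
    else if (j : ℕ) = (i : ℕ) + 1 then θw
    else 0

/-- the congestion–freeflow mode matrix A_CF^s = diag(Δ_s, Θ_{N−s}) -/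
def matACF (N s : ℕ) (θv θw : ℝ) : Matrix (Fin N) (Fin N) ℝ :=
  Matrix.of fun i j =>
    if (i : ℕ) < s ∧ (j : ℕ) < s then
      (if i = j then 1 - θw else if (j : ℕ) = (i : ℕ) + 1 then θw else 0)
    else if s ≤ (i : ℕ) ∧ s ≤ (j : ℕ) then
      (if i = j then 1 - θv else if (i : ℕ) = (j : ℕ) + 1 then θv else 0)
    else 0

/-- set of observable-mode state transition matrices 𝒜_O -/
def setAO (N : ℕ) (θv θw : ℝ) : Set (Matrix (Fin N) (Fin N) ℝ) :=
  {matAFF N θv, matACC N θw} ∪ {M | ∃ s, 1 ≤ s ∧ s ≤ N - 1 ∧ M = matACF N s θv θw}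

/-- boundary output matrix H_b, rows e_1ᵀ and e_nᵀ -/
def matHb (N : ℕ) : Matrix (Fin 2) (Fin N) ℝ :=
  Matrix.of fun i j =>
    if (i : ℕ) = 0 ∧ (j : ℕ) = 0 then 1
    else if (i : ℕ) = 1 ∧ (j : ℕ) = N - 1 then 1
    else 0

/-- standing assumption on output matrices: pairwise distinct standard basis rows,
including e_1ᵀ and e_nᵀ -/
def standingH {mk N : ℕ} (H : Matrix (Fin mk) (Fin N) ℝ) : Prop :=
  (∀ p : Fin mk, ∃ l : Fin N, H p = fun j => if j = l then 1 else 0) ∧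
  (∀ p q : Fin mk, H p = H q → p = q) ∧
  (∃ p : Fin mk, H p = fun j : Fin N => if (j : ℕ) = 0 then 1 else 0) ∧
  (∃ p : Fin mk, H p = fun j : Fin N => if (j : ℕ) = N - 1 then 1 else 0)

/-- ascending product of inverses  M_lo⁻¹ · M_{lo+1}⁻¹ ⋯ M_hi⁻¹ -/
def prodInvAsc {N : ℕ} (M : ℕ → Matrix (Fin N) (Fin N) ℝ) (lo hi : ℕ) :
    Matrix (Fin N) (Fin N) ℝ :=
  ((List.range (hi + 1 - lo)).map (fun t => (M (lo + t))⁻¹)).prod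

/-- descending product  M_hi · M_{hi−1} ⋯ M_lo -/
def prodDesc {N : ℕ} (M : ℕ → Matrix (Fin N) (Fin N) ℝ) (hi lo : ℕ) :
    Matrix (Fin N) (Fin N) ℝ :=
  ((List.range (hi + 1 - lo)).map (fun t => M (hi - t))).prod

/-- a_𝓘 -/
def aI (N : ℕ) (θv θw r2 : ℝ) : ℝ :=
  r2⁻¹ * sInf {t : ℝ | ∃ M : ℕ → Matrix (Fin N) (Fin N) ℝ,
    (∀ ι, 1 ≤ ι → ι ≤ max 1 (N - 2) → M ι ∈ setAO N θv θw) ∧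
    t = lamMin ((matHb N)ᵀ * matHb N +
      ∑ ι ∈ Finset.Icc 1 (max 1 (N - 2)),
        (prodInvAsc M ι (max 1 (N - 2)))ᵀ * (matHb N)ᵀ * matHb N *
          prodInvAsc M ι (max 1 (N - 2)))}

/-- b_𝓘 -/
def bI (N : ℕ) (θv θw r1 : ℝ) : ℝ :=
  r1⁻¹ * sSup {t : ℝ | ∃ M : ℕ → Matrix (Fin N) (Fin N) ℝ,
    (∀ ι, 1 ≤ ι → ι ≤ max 1 (N - 2) → M ι ∈ setAO N θv θw) ∧
    t = lamMax (1 +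
      ∑ ι ∈ Finset.Icc 1 (max 1 (N - 2)),
        (prodInvAsc M ι (max 1 (N - 2)))ᵀ * prodInvAsc M ι (max 1 (N - 2)))}

/-- a_𝓒 -/
def aC (N : ℕ) (θv θw q1 : ℝ) : ℝ :=
  q1 * sInf {t : ℝ | ∃ M : ℕ → Matrix (Fin N) (Fin N) ℝ,
    (∀ ι, 1 ≤ ι → ι ≤ max 1 (N - 2) → M ι ∈ setAO N θv θw) ∧
    t = lamMin (1 +
      ∑ ι ∈ Finset.Icc 1 (max 1 (N - 2) - 1),
        prodDesc M (max 1 (N - 2) - 1) ι * (prodDesc M (max 1 (N - 2) - 1) ι)ᵀ)}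

/-- b_𝓒 -/
def bC (N : ℕ) (θv θw q2 : ℝ) : ℝ :=
  q2 * sSup {t : ℝ | ∃ M : ℕ → Matrix (Fin N) (Fin N) ℝ,
    (∀ ι, 1 ≤ ι → ι ≤ max 1 (N - 2) → M ι ∈ setAO N θv θw) ∧
    t = lamMax (1 +
      ∑ ι ∈ Finset.Icc 1 (max 1 (N - 2) - 1),
        prodDesc M (max 1 (N - 2) - 1) ι * (prodDesc M (max 1 (N - 2) - 1) ι)ᵀ)}

/-- constant c₁ -/
def cLow (N : ℕ) (θv θw q1 q2 r1 r2 : ℝ) : ℝ :=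
  min (aI N θv θw r2) (aC N θv θw q1) /
    (1 + min (aI N θv θw r2) (aC N θv θw q1) * max (bI N θv θw r1) (bC N θv θw q2))

/-- constant c₂ -/
def cHigh (N : ℕ) (θv θw q1 q2 r1 r2 : ℝ) : ℝ :=
  (1 + min (aI N θv θw r2) (aC N θv θw q1) * max (bI N θv θw r1) (bC N θv θw q2)) /
    min (aI N θv θw r2) (aC N θv θw q1)


/-- left selector `Î_{i,j}` for `j = i−1`: picks the first `o` components -/
def selLeft (o d : ℕ) : Matrix (Fin o) (Fin d) ℝ :=
  Matrix.of fun r c => if (c : ℕ) = (r : ℕ) then 1 else 0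

/-- right selector `Î_{i,j}` for `j = i+1`: picks the last `o` components -/
def selRight (o d : ℕ) : Matrix (Fin o) (Fin d) ℝ :=
  Matrix.of fun r c => if (c : ℕ) = d - o + (r : ℕ) then 1 else 0

namespace Matrix

lemma IsHermitian.dotProduct_mulVec_comm {n : Type*} [Fintype n] {M : Matrix n n ℝ}
    (hM : M.IsHermitian) (x y : n → ℝ) : x ⬝ᵥ M *ᵥ y = y ⬝ᵥ M *ᵥ x := by
  rw [dotProduct_mulVec, ← mulVec_transpose, (isHermitian_iff_isSymm.mp hM).eq, dotProduct_comm]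

lemma IsHermitian.add_dotProduct_mulVec_add {n : Type*} [Fintype n] {M : Matrix n n ℝ}
    (hM : M.IsHermitian) (x y : n → ℝ) :
    (x + y) ⬝ᵥ M *ᵥ (x + y) = x ⬝ᵥ M *ᵥ x + 2 * (y ⬝ᵥ M *ᵥ x) + y ⬝ᵥ M *ᵥ y := by
  rw [mulVec_add, dotProduct_add, add_dotProduct, add_dotProduct, hM.dotProduct_mulVec_comm x y]
  ring

lemma IsHermitian.sub_dotProduct_mulVec_sub {n : Type*} [Fintype n] {M : Matrix n n ℝ}
    (hM : M.IsHermitian) (x y : n → ℝ) :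
    (x - y) ⬝ᵥ M *ᵥ (x - y) = x ⬝ᵥ M *ᵥ x - 2 * (y ⬝ᵥ M *ᵥ x) + y ⬝ᵥ M *ᵥ y := by
  rw [mulVec_sub, dotProduct_sub, sub_dotProduct, sub_dotProduct, hM.dotProduct_mulVec_comm x y]
  ring

lemma mulVec_dotProduct_mulVec_mulVec {n o : Type*} [Fintype n] [Fintype o] (C : Matrix o n ℝ)
    (M : Matrix o o ℝ) (x : n → ℝ) :
    (C *ᵥ x) ⬝ᵥ M *ᵥ (C *ᵥ x) = x ⬝ᵥ (Cᵀ * M * C) *ᵥ x := by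
  rw [← mulVec_mulVec, ← mulVec_mulVec, dotProduct_mulVec x Cᵀ, vecMul_transpose]

lemma PosSemidef.add_dotProduct_mulVec_add_le {n : Type*} [Fintype n] {M : Matrix n n ℝ}
    (hM : M.PosSemidef) (x y : n → ℝ) :
    (x + y) ⬝ᵥ M *ᵥ (x + y) ≤ 2 * (x ⬝ᵥ M *ᵥ x) + 2 * (y ⬝ᵥ M *ᵥ y) := by
  have h := hM.dotProduct_mulVec_nonneg (x - y)
  rw [star_trivial, hM.isHermitian.sub_dotProduct_mulVec_sub] at h
  rw [hM.isHermitian.add_dotProduct_mulVec_add]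
  linarith

lemma PosDef.two_mul_dotProduct_sub_le {n : Type*} [Fintype n] [DecidableEq n]
    {M : Matrix n n ℝ} (hM : M.PosDef) (x y : n → ℝ) :
    2 * (y ⬝ᵥ x) - y ⬝ᵥ M *ᵥ y ≤ x ⬝ᵥ M⁻¹ *ᵥ x := by
  set z := M⁻¹ *ᵥ x
  have hz : M *ᵥ z = x := by
    rw [mulVec_mulVec, mul_nonsing_inv _ ((isUnit_iff_isUnit_det M).mp hM.isUnit), one_mulVec]
  have h := hM.posSemidef.dotProduct_mulVec_nonneg (y - z)
  rw [star_trivial, hM.isHermitian.sub_dotProduct_mulVec_sub, hz,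
    hM.isHermitian.dotProduct_mulVec_comm z y, hz] at h
  rw [dotProduct_comm x z]
  linarith

lemma dotProduct_mulVec_le_sum_abs {o : Type*} [Fintype o] (M : Matrix o o ℝ) (x : o → ℝ) :
    x ⬝ᵥ M *ᵥ x ≤ (∑ p, ∑ q, |M p q|) * ∑ l, x l ^ 2 := by
  have hsq : ∀ p q, |x p * x q| ≤ ∑ l, x l ^ 2 := fun p q => by
    have hp := single_le_sum (fun l _ => sq_nonneg (x l)) (mem_univ p)
    have hq := single_le_sum (fun l _ => sq_nonneg (x l)) (mem_univ q)
    rw [abs_mul]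
    nlinarith [abs_nonneg (x p), abs_nonneg (x q), sq_abs (x p), sq_abs (x q)]
  calc x ⬝ᵥ M *ᵥ x = ∑ p, ∑ q, M p q * (x p * x q) := by
        simp only [dotProduct, mulVec, mul_sum]; congr! 2; ring
    _ ≤ ∑ p, ∑ q, |M p q| * ∑ l, x l ^ 2 := by
        refine sum_le_sum fun p _ => sum_le_sum fun q _ => ?_
        calc M p q * (x p * x q) ≤ |M p q * (x p * x q)| := le_abs_self _
          _ ≤ |M p q| * ∑ l, x l ^ 2 := by rw [abs_mul]; gcongr; exact hsq p q
    _ = (∑ p, ∑ q, |M p q|) * ∑ l, x l ^ 2 := by simp only [sum_mul]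

lemma posDef_of_posDef_sub_smul_one {n : Type*} [Fintype n] [DecidableEq n] {M : Matrix n n ℝ}
    {c : ℝ} (hc : 0 < c) (h : (M - c • 1).PosDef) : M.PosDef := by
  simpa using h.add_posSemidef (PosSemidef.one.smul hc.le)

lemma PosDef.mul_mul_transpose_add {n m : Type*} [Fintype n] [Fintype m] {Γ : Matrix n n ℝ}
    {Q : Matrix m m ℝ} (hΓ : Γ.PosDef) (hQ : Q.PosDef) (A : Matrix m n ℝ) :
    (A * Γ * Aᵀ + Q).PosDef := by
  have h := hΓ.posSemidef.mul_mul_conjTranspose_same A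
  rw [conjTranspose_eq_transpose_of_trivial] at h
  exact PosDef.posSemidef_add h hQ

-- By the Woodbury identity the updated covariance is `(G⁻¹ + Hᵀ R⁻¹ H)⁻¹`.
lemma PosDef.kalman_posterior {n m : Type*} [Fintype n] [Fintype m] [DecidableEq n]
    [DecidableEq m] {G : Matrix n n ℝ} {R : Matrix m m ℝ} (hG : G.PosDef) (hR : R.PosDef)
    (H : Matrix m n ℝ) : (G - G * Hᵀ * (R + H * G * Hᵀ)⁻¹ * H * G).PosDef := by
  have hG' : G⁻¹⁻¹ = G := nonsing_inv_nonsing_inv _ ((isUnit_iff_isUnit_det G).mp hG.isUnit)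
  have hR' : R⁻¹⁻¹ = R := nonsing_inv_nonsing_inv _ ((isUnit_iff_isUnit_det R).mp hR.isUnit)
  have hS : (R + H * G * Hᵀ).PosDef := add_comm (H * G * Hᵀ) R ▸ hG.mul_mul_transpose_add hR H
  have hW := add_mul_mul_inv_eq_sub G⁻¹ Hᵀ R⁻¹ H hG.inv.isUnit hR.inv.isUnit
    (by rw [hR', hG']; exact hS.isUnit)
  rw [hR', hG'] at hW
  rw [← hW]
  have h := hR.inv.posSemidef.conjTranspose_mul_mul_same H
  rw [conjTranspose_eq_transpose_of_trivial] at h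
  exact (hG.inv.add_posSemidef h).inv

lemma PosDef.kalman_posterior_le {n m : Type*} [Fintype n] [Fintype m] [DecidableEq m]
    {G : Matrix n n ℝ} {R : Matrix m m ℝ} (hG : G.PosDef) (hR : R.PosDef) (H : Matrix m n ℝ) :
    (G - (G - G * Hᵀ * (R + H * G * Hᵀ)⁻¹ * H * G)).PosSemidef := by
  have hS : (R + H * G * Hᵀ).PosDef := add_comm (H * G * Hᵀ) R ▸ hG.mul_mul_transpose_add hR H
  have h := hS.inv.posSemidef.conjTranspose_mul_mul_same (H * G)
  rw [sub_sub_cancel]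
  rwa [conjTranspose_eq_transpose_of_trivial, transpose_mul,
    (isHermitian_iff_isSymm.mp hG.isHermitian).eq, ← Matrix.mul_assoc] at h

lemma one_sub_mul_eq_sub_mul_mul_inv {α n m : Type*} [CommRing α] [Fintype n] [Fintype m]
    [DecidableEq n] {G : Matrix n n α} (hG : IsUnit G.det) (K : Matrix n m α)
    (H : Matrix m n α) : 1 - K * H = (G - K * H * G) * G⁻¹ := by
  rw [Matrix.sub_mul, mul_nonsing_inv _ hG, mul_nonsing_inv_cancel_right _ _ hG]

lemma kalman_contraction {n : Type*} [Fintype n] [DecidableEq n] {Γ Q G P A : Matrix n n ℝ}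
    (hΓ : Γ.PosDef) (hQ : Q.PosDef) (hG : G = A * Γ * Aᵀ + Q) (hP : P.PosDef)
    (hGP : (G - P).PosSemidef) {x : n → ℝ} (hx : x ≠ 0) :
    (P *ᵥ G⁻¹ *ᵥ A *ᵥ x) ⬝ᵥ P⁻¹ *ᵥ (P *ᵥ G⁻¹ *ᵥ A *ᵥ x) < x ⬝ᵥ Γ⁻¹ *ᵥ x := by
  have hGdet := (isUnit_iff_isUnit_det G).mp (hG ▸ hΓ.mul_mul_transpose_add hQ A).isUnit
  set w := G⁻¹ *ᵥ A *ᵥ x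
  have hGw : G *ᵥ w = A *ᵥ x := by rw [mulVec_mulVec, mul_nonsing_inv _ hGdet, one_mulVec]
  rw [mulVec_mulVec w P⁻¹ P, nonsing_inv_mul _ ((isUnit_iff_isUnit_det P).mp hP.isUnit),
    one_mulVec, dotProduct_comm]
  -- completing the square at `y = Aᵀw` gives `xᵀΓ⁻¹x ≥ wᵀGw + wᵀQw`
  have hsq := hΓ.two_mul_dotProduct_sub_le x (Aᵀ *ᵥ w)
  rw [mulVec_dotProduct_mulVec_mulVec, transpose_transpose, mulVec_transpose,
    ← dotProduct_mulVec, ← hGw, show A * Γ * Aᵀ = G - Q by rw [hG, add_sub_cancel_right],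
    sub_mulVec, dotProduct_sub] at hsq
  have hPG := hGP.dotProduct_mulVec_nonneg w
  rw [star_trivial, sub_mulVec, dotProduct_sub] at hPG
  by_cases hw : w = 0
  · simpa [hw] using hΓ.inv.dotProduct_mulVec_pos hx
  · have hQw := hQ.dotProduct_mulVec_pos hw
    rw [star_trivial] at hQw
    linarith

lemma kalman_contraction_le {n : Type*} [Fintype n] [DecidableEq n] {Γ Q G P A : Matrix n n ℝ}
    (hΓ : Γ.PosDef) (hQ : Q.PosDef) (hG : G = A * Γ * Aᵀ + Q) (hP : P.PosDef)
    (hGP : (G - P).PosSemidef) (x : n → ℝ) :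
    (P *ᵥ G⁻¹ *ᵥ A *ᵥ x) ⬝ᵥ P⁻¹ *ᵥ (P *ᵥ G⁻¹ *ᵥ A *ᵥ x) ≤ x ⬝ᵥ Γ⁻¹ *ᵥ x := by
  by_cases hx : x = 0
  · simp [hx]
  · exact (kalman_contraction hΓ hQ hG hP hGP hx).le

lemma PosDef.dotProduct_inv_mulVec_add {n : Type*} [Fintype n] [DecidableEq n]
    {P : Matrix n n ℝ} (hP : P.PosDef) (b s : n → ℝ) :
    (P *ᵥ b + s) ⬝ᵥ P⁻¹ *ᵥ (P *ᵥ b + s) =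
      (P *ᵥ b) ⬝ᵥ P⁻¹ *ᵥ (P *ᵥ b) + 2 * (s ⬝ᵥ b) + s ⬝ᵥ P⁻¹ *ᵥ s := by
  rw [hP.inv.isHermitian.add_dotProduct_mulVec_add, mulVec_mulVec,
    nonsing_inv_mul _ ((isUnit_iff_isUnit_det P).mp hP.isUnit), one_mulVec]

lemma PosDef.smul_mulVec_dotProduct_inv_mulVec {n o : Type*} [Fintype n] [Fintype o]
    [DecidableEq n] {G : Matrix n n ℝ} (hG : G.PosDef) (B : Matrix o n ℝ) (γ : ℝ) (v : o → ℝ)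
    (w : n → ℝ) : (γ • ((G * Bᵀ) *ᵥ v)) ⬝ᵥ G⁻¹ *ᵥ w = γ * (v ⬝ᵥ B *ᵥ w) := by
  rw [smul_dotProduct, smul_eq_mul, ← vecMul_transpose, ← dotProduct_mulVec, transpose_mul,
    transpose_transpose, (isHermitian_iff_isSymm.mp hG.isHermitian).eq, ← mulVec_mulVec,
    mulVec_mulVec (M := G), mul_nonsing_inv _ ((isUnit_iff_isUnit_det G).mp hG.isUnit),
    one_mulVec]

end Matrix

lemma Finset.sum_range_add_eq_sum_range_pred {M : Type*} [AddCommMonoid M] {N : ℕ}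
    {f g : ℕ → M} (hf : f 0 = 0) (hg : g (N - 1) = 0) :
    ∑ i ∈ range N, (f i + g i) = ∑ j ∈ range (N - 1), (f (j + 1) + g j) := by
  cases N with
  | zero => simp
  | succ N =>
    rw [Nat.add_sub_cancel] at hg ⊢
    rw [sum_add_distrib, sum_add_distrib, sum_range_succ', sum_range_succ, hf, hg, add_zero,
      add_zero]

namespace KalmanConsensus

open Matrix

def gainBound {n o : Type*} [Fintype n] [Fintype o] [DecidableEq n] (G P : Matrix n n ℝ)
    (B : Matrix o n ℝ) : ℝ :=
  ∑ p, ∑ q, |((G * Bᵀ)ᵀ * P⁻¹ * (G * Bᵀ)) p q|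

lemma gainBound_nonneg {n o : Type*} [Fintype n] [Fintype o] [DecidableEq n]
    (G P : Matrix n n ℝ) (B : Matrix o n ℝ) : 0 ≤ gainBound G P B :=
  sum_nonneg fun _ _ => sum_nonneg fun _ _ => abs_nonneg _

lemma smul_mulVec_dotProduct_le_gainBound {n o : Type*} [Fintype n] [Fintype o]
    [DecidableEq n] (G P : Matrix n n ℝ) (B : Matrix o n ℝ) (γ : ℝ) (v : o → ℝ) :
    (γ • ((G * Bᵀ) *ᵥ v)) ⬝ᵥ P⁻¹ *ᵥ (γ • ((G * Bᵀ) *ᵥ v)) ≤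
      γ ^ 2 * gainBound G P B * ∑ l, v l ^ 2 := by
  rw [smul_dotProduct, mulVec_smul, dotProduct_smul, smul_eq_mul, smul_eq_mul,
    mulVec_dotProduct_mulVec_mulVec, ← mul_assoc, mul_assoc (γ ^ 2), ← sq]
  exact mul_le_mul_of_nonneg_left (dotProduct_mulVec_le_sum_abs _ v) (sq_nonneg γ)

section Chain

variable {nd : ℕ → ℕ} (N : ℕ) (ov : ℕ → ℕ)
  (G P : (i : ℕ) → Matrix (Fin (nd i)) (Fin (nd i)) ℝ) (γ : ℕ → ℝ) (a : (i : ℕ) → Fin (nd i) → ℝ)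

-- Agents are `0, …, N - 1` and edge `j` joins agents `j` and `j + 1`; `a` holds the predicted
-- errors. `disagreement ov a j` is the paper's `u^{j+1}_j`, and `consensusLeft`,
-- `consensusRight` are the corrections `C^{i-1}_i u^{i-1}_i`, `C^{i+1}_i u^{i+1}_i` of agent `i`.
def disagreement (j : ℕ) : Fin (ov j) → ℝ :=
  selLeft (ov j) (nd (j + 1)) *ᵥ a (j + 1) - selRight (ov j) (nd j) *ᵥ a j

def consensusLeft (i : ℕ) : Fin (nd i) → ℝ :=
  if 1 ≤ i then
    γ (i - 1) • ((G i * (selLeft (ov (i - 1)) (nd i))ᵀ) *ᵥ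
      (selRight (ov (i - 1)) (nd (i - 1)) *ᵥ a (i - 1) - selLeft (ov (i - 1)) (nd i) *ᵥ a i))
  else 0

def consensusRight (i : ℕ) : Fin (nd i) → ℝ :=
  if i + 1 < N then γ i • ((G i * (selRight (ov i) (nd i))ᵀ) *ᵥ disagreement ov a i) else 0

-- `2 - √2` is the slack between the `-2` of the cross terms and the claimed `-√2`; the `4`
-- pays for `(x + y)ᵀM(x + y) ≤ 2xᵀMx + 2yᵀMy` and for the two agents sharing an edge.
def consensusThreshold (i : ℕ) : ℝ :=
  (2 - √2) / (4 * (1 + gainBound (G i) (P i) (selLeft (ov (i - 1)) (nd i)) +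
    gainBound (G i) (P i) (selRight (ov i) (nd i))))

variable {N ov G P γ a}

lemma consensusThreshold_pos (i : ℕ) : 0 < consensusThreshold ov G P i := by
  have := gainBound_nonneg (G i) (P i) (selLeft (ov (i - 1)) (nd i))
  have := gainBound_nonneg (G i) (P i) (selRight (ov i) (nd i))
  have : √2 < 2 := by
    rw [Real.sqrt_lt' two_pos]; norm_num
  unfold consensusThreshold; apply div_pos <;> linarith

lemma mul_gainBound_le_of_lt_consensusThreshold {i : ℕ} {c : ℝ} (hc : 0 ≤ c)
    (h : c < consensusThreshold ov G P i) :
    c * gainBound (G i) (P i) (selLeft (ov (i - 1)) (nd i)) ≤ (2 - √2) / 4 ∧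
      c * gainBound (G i) (P i) (selRight (ov i) (nd i)) ≤ (2 - √2) / 4 := by
  have hL := gainBound_nonneg (G i) (P i) (selLeft (ov (i - 1)) (nd i))
  have hR := gainBound_nonneg (G i) (P i) (selRight (ov i) (nd i))
  rw [consensusThreshold, lt_div_iff₀ (by positivity)] at h
  constructor <;> nlinarith

lemma consensusLeft_zero : consensusLeft ov G γ a 0 = 0 := if_neg (by omega)

lemma consensusLeft_succ (j : ℕ) :
    consensusLeft ov G γ a (j + 1) =
      γ j • ((G (j + 1) * (selLeft (ov j) (nd (j + 1)))ᵀ) *ᵥ -disagreement ov a j) := by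
  rw [consensusLeft, if_pos (Nat.le_add_left 1 j), disagreement, neg_sub]
  rfl

lemma consensusRight_of_lt {i : ℕ} (h : i + 1 < N) :
    consensusRight N ov G γ a i =
      γ i • ((G i * (selRight (ov i) (nd i))ᵀ) *ᵥ disagreement ov a i) := if_pos h

lemma consensusRight_pred : consensusRight N ov G γ a (N - 1) = 0 := if_neg (by omega)

lemma sum_consensus_dotProduct (hG : ∀ i < N, (G i).PosDef) :
    ∑ i ∈ range N,
        (consensusLeft ov G γ a i + consensusRight N ov G γ a i) ⬝ᵥ (G i)⁻¹ *ᵥ a i =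
      -∑ j ∈ range (N - 1), γ j * ∑ l, disagreement ov a j l ^ 2 := by
  simp_rw [add_dotProduct]
  rw [sum_range_add_eq_sum_range_pred (by rw [consensusLeft_zero, zero_dotProduct])
    (by rw [consensusRight_pred, zero_dotProduct]), ← sum_neg_distrib]
  refine sum_congr rfl fun j hj => ?_
  have hj : j + 1 < N := by rw [mem_range] at hj; omega
  rw [consensusLeft_succ, consensusRight_of_lt hj,
    (hG _ hj).smul_mulVec_dotProduct_inv_mulVec,
    (hG _ (by omega)).smul_mulVec_dotProduct_inv_mulVec, neg_dotProduct]
  have hu : disagreement ov a j ⬝ᵥ (selLeft (ov j) (nd (j + 1)) *ᵥ a (j + 1)) -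
      disagreement ov a j ⬝ᵥ (selRight (ov j) (nd j) *ᵥ a j) =
        ∑ l, disagreement ov a j l ^ 2 := by
    rw [← dotProduct_sub, ← disagreement]; simp only [dotProduct, sq]
  linear_combination -γ j * hu

lemma sum_consensus_quad_le (hP : ∀ i < N, (P i).PosDef) (hγ : ∀ j, 0 ≤ γ j)
    (hθ : ∀ j, j + 1 < N →
      γ j < consensusThreshold ov G P j ∧ γ j < consensusThreshold ov G P (j + 1)) :
    ∑ i ∈ range N, (consensusLeft ov G γ a i + consensusRight N ov G γ a i) ⬝ᵥ
        (P i)⁻¹ *ᵥ (consensusLeft ov G γ a i + consensusRight N ov G γ a i) ≤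
      (2 - √2) * ∑ j ∈ range (N - 1), γ j * ∑ l, disagreement ov a j l ^ 2 := by
  set q : (i : ℕ) → (Fin (nd i) → ℝ) → ℝ := fun i s => s ⬝ᵥ (P i)⁻¹ *ᵥ s
  calc _ ≤ ∑ i ∈ range N, (2 * q i (consensusLeft ov G γ a i) +
          2 * q i (consensusRight N ov G γ a i)) :=
        sum_le_sum fun i hi =>
          (hP i (mem_range.mp hi)).inv.posSemidef.add_dotProduct_mulVec_add_le _ _
    _ = ∑ j ∈ range (N - 1), (2 * q (j + 1) (consensusLeft ov G γ a (j + 1)) +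
          2 * q j (consensusRight N ov G γ a j)) :=
        sum_range_add_eq_sum_range_pred (by simp [q, consensusLeft_zero])
          (by simp [q, consensusRight_pred])
    _ ≤ ∑ j ∈ range (N - 1), (2 - √2) * (γ j * ∑ l, disagreement ov a j l ^ 2) := by
        refine sum_le_sum fun j hj => ?_
        have hj : j + 1 < N := by rw [mem_range] at hj; omega
        have hL := smul_mulVec_dotProduct_le_gainBound (G (j + 1)) (P (j + 1))
          (selLeft (ov j) (nd (j + 1))) (γ j) (-disagreement ov a j)
        have hR := smul_mulVec_dotProduct_le_gainBound (G j) (P j)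
          (selRight (ov j) (nd j)) (γ j) (disagreement ov a j)
        simp only [Pi.neg_apply, neg_sq] at hL
        have hθL : γ j * gainBound (G (j + 1)) (P (j + 1)) (selLeft (ov j) (nd (j + 1))) ≤
            (2 - √2) / 4 := (mul_gainBound_le_of_lt_consensusThreshold (hγ j) (hθ j hj).2).1
        have hθR := (mul_gainBound_le_of_lt_consensusThreshold (hγ j) (hθ j hj).1).2
        have hS : 0 ≤ γ j * ∑ l, disagreement ov a j l ^ 2 :=
          mul_nonneg (hγ j) (sum_nonneg fun _ _ => sq_nonneg _)
        simp only [q, consensusLeft_succ, consensusRight_of_lt hj]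
        nlinarith [mul_le_mul_of_nonneg_left (add_le_add hθL hθR) hS]
    _ = _ := (mul_sum _ _ _).symm

theorem lyapunov_step (Γ Q A F : (i : ℕ) → Matrix (Fin (nd i)) (Fin (nd i)) ℝ)
    (x x' : (i : ℕ) → Fin (nd i) → ℝ) (hΓ : ∀ i < N, (Γ i).PosDef)
    (hQ : ∀ i < N, (Q i).PosDef) (hG : ∀ i < N, G i = A i * Γ i * (A i)ᵀ + Q i)
    (hP : ∀ i < N, (P i).PosDef) (hGP : ∀ i < N, (G i - P i).PosSemidef)
    (hF : ∀ i < N, F i = P i * (G i)⁻¹) (hγ : ∀ j, 0 ≤ γ j)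
    (hθ : ∀ j, j + 1 < N →
      γ j < consensusThreshold ov G P j ∧ γ j < consensusThreshold ov G P (j + 1))
    (hx' : ∀ i < N, x' i = F i *ᵥ (A i *ᵥ x i) +
      consensusLeft ov G γ (fun i => A i *ᵥ x i) i +
      consensusRight N ov G γ (fun i => A i *ᵥ x i) i)
    (hx : ∃ i < N, x i ≠ 0) :
    ∑ i ∈ range N, x' i ⬝ᵥ (P i)⁻¹ *ᵥ x' i - ∑ i ∈ range N, x i ⬝ᵥ (Γ i)⁻¹ *ᵥ x i <
      -√2 * ∑ j ∈ range (N - 1), γ j * ∑ l, disagreement ov (fun i => A i *ᵥ x i) j l ^ 2 := by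
  set a := fun i => A i *ᵥ x i
  set s := fun i => consensusLeft ov G γ a i + consensusRight N ov G γ a i
  have hexpand : ∀ i ∈ range N, x' i ⬝ᵥ (P i)⁻¹ *ᵥ x' i =
      (P i *ᵥ (G i)⁻¹ *ᵥ a i) ⬝ᵥ (P i)⁻¹ *ᵥ (P i *ᵥ (G i)⁻¹ *ᵥ a i) +
        2 * (s i ⬝ᵥ (G i)⁻¹ *ᵥ a i) + s i ⬝ᵥ (P i)⁻¹ *ᵥ s i := fun i hi => by
    rw [mem_range] at hi
    rw [hx' i hi, add_assoc, hF i hi, ← mulVec_mulVec, (hP i hi).dotProduct_inv_mulVec_add]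
  have hKalman : ∑ i ∈ range N, (P i *ᵥ (G i)⁻¹ *ᵥ a i) ⬝ᵥ (P i)⁻¹ *ᵥ (P i *ᵥ (G i)⁻¹ *ᵥ a i) <
      ∑ i ∈ range N, x i ⬝ᵥ (Γ i)⁻¹ *ᵥ x i := by
    obtain ⟨i₀, hi₀, hx₀⟩ := hx
    refine sum_lt_sum (fun i hi => ?_) ⟨i₀, mem_range.mpr hi₀, ?_⟩
    · rw [mem_range] at hi
      exact kalman_contraction_le (hΓ i hi) (hQ i hi) (hG i hi) (hP i hi) (hGP i hi) (x i)
    · exact kalman_contraction (hΓ i₀ hi₀) (hQ i₀ hi₀) (hG i₀ hi₀) (hP i₀ hi₀) (hGP i₀ hi₀) hx₀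
  have hGpd : ∀ i < N, (G i).PosDef := fun i hi =>
    hG i hi ▸ (hΓ i hi).mul_mul_transpose_add (hQ i hi) (A i)
  rw [sum_congr rfl hexpand, sum_add_distrib, sum_add_distrib, ← mul_sum,
    sum_consensus_dotProduct hGpd]
  have hquad := sum_consensus_quad_le (a := a) hP hγ hθ
  linarith

end Chain

end KalmanConsensus

open KalmanConsensus

theorem stmt5_general
    (N : ℕ)
    (q1 q2 r1 r2 : ℝ) (hq0 : 0 < q1) (hr0 : 0 < r1)
    (nd : ℕ → ℕ) (ov : ℕ → ℕ)
    (A : (i : ℕ) → ℕ → Matrix (Fin (nd i)) (Fin (nd i)) ℝ)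
    (md : ℕ → ℕ → ℕ)
    (H : (i k : ℕ) → Matrix (Fin (md i k)) (Fin (nd i)) ℝ)
    (Q : (i : ℕ) → ℕ → Matrix (Fin (nd i)) (Fin (nd i)) ℝ)
    (R : (i k : ℕ) → Matrix (Fin (md i k)) (Fin (md i k)) ℝ)
    (hQ : ∀ i k, i < N → loewnerLT (q1 • 1) (Q i k) ∧ loewnerLT (Q i k) (q2 • 1))
    (hR : ∀ i k, i < N → loewnerLT (r1 • 1) (R i k) ∧ loewnerLT (R i k) (r2 • 1))
    (Γpost Γprior : (i : ℕ) → ℕ → Matrix (Fin (nd i)) (Fin (nd i)) ℝ)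
    (K : (i k : ℕ) → Matrix (Fin (nd i)) (Fin (md i k)) ℝ)
    (hΓ0 : ∀ i, i < N → (Γpost i 0).PosDef)
    (hprior : ∀ i k, i < N →
      Γprior i (k + 1) = A i k * Γpost i k * (A i k)ᵀ + Q i k)
    (hK : ∀ i k, i < N → K i (k + 1) = Γprior i (k + 1) * (H i (k + 1))ᵀ *
        (R i (k + 1) + H i (k + 1) * Γprior i (k + 1) * (H i (k + 1))ᵀ)⁻¹)
    (hpost : ∀ i k, i < N →
      Γpost i (k + 1) = Γprior i (k + 1) - K i (k + 1) * H i (k + 1) * Γprior i (k + 1)) :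
    ∃ γstar : ℕ → ℕ → ℝ, (∀ i k, 0 < γstar i k) ∧
      ∀ γE : ℕ → ℕ → ℝ,
        (∀ i k, 0 < γE i k) →
        (∀ i k, i + 1 < N →
          γE i (k + 1) < γstar i (k + 1) ∧ γE i (k + 1) < γstar (i + 1) (k + 1)) →
        ∀ η : (i : ℕ) → ℕ → (Fin (nd i) → ℝ),
          (∀ i, i < N → ∀ k,
            η i (k + 1) =
              (1 - K i (k + 1) * H i (k + 1)).mulVec ((A i k).mulVec (η i k))
              + (if 1 ≤ i then
                  γE (i - 1) (k + 1) •
                    (Γprior i (k + 1) * (selLeft (ov (i - 1)) (nd i))ᵀ).mulVec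
                      ((selRight (ov (i - 1)) (nd (i - 1))).mulVec
                          ((A (i - 1) k).mulVec (η (i - 1) k)) -
                        (selLeft (ov (i - 1)) (nd i)).mulVec ((A i k).mulVec (η i k)))
                 else 0)
              + (if i + 1 < N then
                  γE i (k + 1) •
                    (Γprior i (k + 1) * (selRight (ov i) (nd i))ᵀ).mulVec
                      ((selLeft (ov i) (nd (i + 1))).mulVec
                          ((A (i + 1) k).mulVec (η (i + 1) k)) -
                        (selRight (ov i) (nd i)).mulVec ((A i k).mulVec (η i k)))
                 else 0)) →
          ∀ k, (∃ i, i < N ∧ η i k ≠ 0) →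
            (∑ i ∈ Finset.range N,
                (η i (k + 1)) ⬝ᵥ ((Γpost i (k + 1))⁻¹).mulVec (η i (k + 1))) -
              (∑ i ∈ Finset.range N, (η i k) ⬝ᵥ ((Γpost i k)⁻¹).mulVec (η i k)) <
            -(Real.sqrt 2) *
              ∑ ihat ∈ Finset.range (N - 1), γE ihat (k + 1) *
                (∑ x, ((selLeft (ov ihat) (nd (ihat + 1))).mulVec
                      ((A (ihat + 1) k).mulVec (η (ihat + 1) k)) x -
                    (selRight (ov ihat) (nd ihat)).mulVec
                      ((A ihat k).mulVec (η ihat k)) x) ^ 2) := by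
  have hQpd : ∀ i k, i < N → (Q i k).PosDef := fun i k hi =>
    posDef_of_posDef_sub_smul_one hq0 (hQ i k hi).1
  have hRpd : ∀ i k, i < N → (R i k).PosDef := fun i k hi =>
    posDef_of_posDef_sub_smul_one hr0 (hR i k hi).1
  have hpostPD : ∀ i, i < N → ∀ k, (Γpost i k).PosDef := by
    intro i hi k
    induction k with
    | zero => exact hΓ0 i hi
    | succ k ih =>
      rw [hpost i k hi, hK i k hi, hprior i k hi]
      exact (ih.mul_mul_transpose_add (hQpd i k hi) _).kalman_posterior (hRpd i (k + 1) hi) _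
  have hpriorPD : ∀ i k, i < N → (Γprior i (k + 1)).PosDef := fun i k hi =>
    hprior i k hi ▸ (hpostPD i hi k).mul_mul_transpose_add (hQpd i k hi) _
  refine ⟨fun i m => consensusThreshold ov (fun i => Γprior i m) (fun i => Γpost i m) i,
    fun i m => consensusThreshold_pos i, ?_⟩
  intro γE hγ hγθ η hη k hk
  refine lyapunov_step (fun i => Γpost i k) (fun i => Q i k) (fun i => A i k)
    (fun i => 1 - K i (k + 1) * H i (k + 1)) (fun i => η i k) (fun i => η i (k + 1))
    (fun i hi => hpostPD i hi k) (fun i hi => hQpd i k hi) (fun i hi => hprior i k hi)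
    (fun i hi => hpostPD i hi (k + 1)) (fun i hi => ?_) (fun i hi => ?_)
    (fun j => (hγ j (k + 1)).le) (fun j hj => hγθ j k hj) (fun i hi => hη i hi k) hk
  · rw [hpost i k hi, hK i k hi]
    exact (hpriorPD i k hi).kalman_posterior_le (hRpd i (k + 1) hi) _
  · rw [hpost i k hi]
    exact one_sub_mul_eq_sub_mul_mul_inv
      ((isUnit_iff_isUnit_det _).mp (hpriorPD i k hi).isUnit) _ _

/-- Appendix E / `ap:deltaV`: for sufficiently small positive scaling
factors, the common Lyapunov function of the DLKCF decreases at a rate proportional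
to the total neighbor disagreement:
`V_k − V_{k−1} < −√2 · Σ_î γ^{î+1}_{î,k} ‖u^{î+1}_{î,k}‖²`. -/
theorem stmt5
    (N : ℕ) (hN : 2 ≤ N)
    (Δt Δx vm w : ℝ) (hΔt : 0 < Δt) (hΔx : 0 < Δx) (hvm : 0 < vm) (hw : 0 < w)
    (hv1 : vm * Δt / Δx < 1) (hw1 : w * Δt / Δx < 1)
    (q1 q2 r1 r2 : ℝ) (hq0 : 0 < q1) (hq : q1 < q2) (hr0 : 0 < r1) (hr : r1 < r2)
    (nd : ℕ → ℕ) (hnd : ∀ i, i < N → 2 ≤ nd i)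
    (ov : ℕ → ℕ) (hov : ∀ i, i + 1 < N → 1 ≤ ov i ∧ ov i ≤ min (nd i) (nd (i + 1)))
    (A : (i : ℕ) → ℕ → Matrix (Fin (nd i)) (Fin (nd i)) ℝ)
    (hA : ∀ i k, i < N → A i k ∈ setAO (nd i) (vm * Δt / Δx) (w * Δt / Δx))
    (md : ℕ → ℕ → ℕ)
    (H : (i k : ℕ) → Matrix (Fin (md i k)) (Fin (nd i)) ℝ)
    (hH : ∀ i k, i < N → standingH (H i k))
    (Q : (i : ℕ) → ℕ → Matrix (Fin (nd i)) (Fin (nd i)) ℝ)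
    (R : (i k : ℕ) → Matrix (Fin (md i k)) (Fin (md i k)) ℝ)
    (hQ : ∀ i k, i < N → loewnerLT (q1 • 1) (Q i k) ∧ loewnerLT (Q i k) (q2 • 1))
    (hR : ∀ i k, i < N → loewnerLT (r1 • 1) (R i k) ∧ loewnerLT (R i k) (r2 • 1))
    (Γpost Γprior : (i : ℕ) → ℕ → Matrix (Fin (nd i)) (Fin (nd i)) ℝ)
    (K : (i k : ℕ) → Matrix (Fin (nd i)) (Fin (md i k)) ℝ)
    (hΓ0 : ∀ i, i < N → (Γpost i 0).PosDef)
    (hprior : ∀ i k, i < N →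
      Γprior i (k + 1) = A i k * Γpost i k * (A i k)ᵀ + Q i k)
    (hK : ∀ i k, i < N → K i (k + 1) = Γprior i (k + 1) * (H i (k + 1))ᵀ *
        (R i (k + 1) + H i (k + 1) * Γprior i (k + 1) * (H i (k + 1))ᵀ)⁻¹)
    (hpost : ∀ i k, i < N →
      Γpost i (k + 1) = Γprior i (k + 1) - K i (k + 1) * H i (k + 1) * Γprior i (k + 1)) :
    ∃ γstar : ℕ → ℕ → ℝ, (∀ i k, 0 < γstar i k) ∧
      ∀ γE : ℕ → ℕ → ℝ,
        (∀ i k, 0 < γE i k) →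
        (∀ i k, i + 1 < N →
          γE i (k + 1) < γstar i (k + 1) ∧ γE i (k + 1) < γstar (i + 1) (k + 1)) →
        ∀ η : (i : ℕ) → ℕ → (Fin (nd i) → ℝ),
          (∀ i, i < N → ∀ k,
            η i (k + 1) =
              (1 - K i (k + 1) * H i (k + 1)).mulVec ((A i k).mulVec (η i k))
              + (if 1 ≤ i then
                  γE (i - 1) (k + 1) •
                    (Γprior i (k + 1) * (selLeft (ov (i - 1)) (nd i))ᵀ).mulVec
                      ((selRight (ov (i - 1)) (nd (i - 1))).mulVec
                          ((A (i - 1) k).mulVec (η (i - 1) k)) -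
                        (selLeft (ov (i - 1)) (nd i)).mulVec ((A i k).mulVec (η i k)))
                 else 0)
              + (if i + 1 < N then
                  γE i (k + 1) •
                    (Γprior i (k + 1) * (selRight (ov i) (nd i))ᵀ).mulVec
                      ((selLeft (ov i) (nd (i + 1))).mulVec
                          ((A (i + 1) k).mulVec (η (i + 1) k)) -
                        (selRight (ov i) (nd i)).mulVec ((A i k).mulVec (η i k)))
                 else 0)) →
          ∀ k, (∃ i, i < N ∧ η i k ≠ 0) →
            (∑ i ∈ Finset.range N,
                (η i (k + 1)) ⬝ᵥ ((Γpost i (k + 1))⁻¹).mulVec (η i (k + 1))) -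
              (∑ i ∈ Finset.range N, (η i k) ⬝ᵥ ((Γpost i k)⁻¹).mulVec (η i k)) <
            -(Real.sqrt 2) *
              ∑ ihat ∈ Finset.range (N - 1), γE ihat (k + 1) *
                (∑ x, ((selLeft (ov ihat) (nd (ihat + 1))).mulVec
                      ((A (ihat + 1) k).mulVec (η (ihat + 1) k)) x -
                    (selRight (ov ihat) (nd ihat)).mulVec
                      ((A ihat k).mulVec (η ihat k)) x) ^ 2) :=
  stmt5_general N q1 q2 r1 r2 hq0 hr0 nd ov A md H Q R hQ hR Γpost Γprior K hΓ0 hprior hK hpost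

end
end

section
/- For any integer ι ≥ 1 and any matrices M_1,…,M_ι ∈ 𝒜_O, the product P = M_ιM_{ι−1}⋯M_1 satisfies: (i) 0 ≤ P(r,c) ≤ 1 for all entries; (ii) P(r,c) = 0 whenever |r−c| > ι+1; (iii) every diagonal entry of PP^T is at most 2ι+1; and (iv) the largest eigenvalue of the positive semidefinite matrix PP^T (equivalently σ_max(P)²) is strictly less than 2(2ι+1). -/
open Matrix Filter Finset

noncomputable section

/-- the product `M_b · M_{b−1} ⋯ M_1` (empty product = identity) -/
def prodSeq {N : ℕ} (M : ℕ → Matrix (Fin N) (Fin N) ℝ) : ℕ → Matrix (Fin N) (Fin N) ℝ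
  | 0 => 1
  | b + 1 => M (b + 1) * prodSeq M b

/-- the stacked observability matrix with blocks `H_b, H_b M₁, H_b M₂M₁, …,
H_b M_T⋯M₁` -/
def stackObs (n T : ℕ) (M : ℕ → Matrix (Fin n) (Fin n) ℝ) :
    Matrix (Fin (2 * (T + 1))) (Fin n) ℝ :=
  Matrix.of fun r c =>
    (matHb n * prodSeq M ((r : ℕ) / 2)) ⟨(r : ℕ) % 2, by omega⟩ c

/-! Every matrix of `𝒜_O` is entrywise nonnegative, tridiagonal and has row sums at most `1`.
Nonnegativity with row sums at most `1` is preserved by products, and bandwidths add, so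
`P = M_ι ⋯ M_1` has entries in `[0, 1]`, row sums at most `1` and bandwidth `ι`. Each column of `P`
then has at most `2ι + 1` nonzero entries, so its column sums are at most `2ι + 1`, and the Schur
test `λ_max(PPᵀ) ≤ ‖P‖₁ ‖P‖_∞` bounds the top eigenvalue by `2ι + 1`. -/

namespace Matrix

section Substochastic

variable (R m : Type*) [Fintype m] [DecidableEq m] [Semiring R] [PartialOrder R] [IsOrderedRing R]

def substochastic : Submonoid (Matrix m m R) where
  carrier := {A | (∀ i j, 0 ≤ A i j) ∧ ∀ i, ∑ j, A i j ≤ 1}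
  mul_mem' {A B} hA hB := by
    refine ⟨fun i j => sum_nonneg fun l _ => mul_nonneg (hA.1 i l) (hB.1 l j), fun i => ?_⟩
    calc ∑ j, (A * B) i j = ∑ l, A i l * ∑ j, B l j := by
          simp only [mul_apply, mul_sum]; exact sum_comm
      _ ≤ ∑ l, A i l * 1 := sum_le_sum fun l _ => mul_le_mul_of_nonneg_left (hB.2 l) (hA.1 i l)
      _ ≤ 1 := by simpa using hA.2 i
  one_mem' := by
    refine ⟨fun i j => ?_, fun i => ?_⟩
    · rw [one_apply]; split_ifs <;> simp
    · rw [sum_eq_single i (fun j _ hj => one_apply_ne' hj) (by simp), one_apply_eq]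

variable {R m} {A : Matrix m m R}

lemma le_one_of_mem_substochastic (hA : A ∈ substochastic R m) (i j : m) : A i j ≤ 1 :=
  (single_le_sum (fun l _ => hA.1 i l) (mem_univ j)).trans (hA.2 i)

lemma mul_transpose_apply_self_le_one (hA : A ∈ substochastic R m) (i : m) :
    (A * Aᵀ) i i ≤ 1 := by
  rw [mul_apply]
  refine (sum_le_sum fun j _ => ?_).trans (hA.2 i)
  exact mul_le_of_le_one_right (hA.1 i j) (le_one_of_mem_substochastic hA i j)

end Substochastic

section Banded

variable {n : ℕ} {R : Type*}

def IsBanded [Zero R] (k : ℕ) (A : Matrix (Fin n) (Fin n) R) : Prop :=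
  ∀ i j : Fin n, (i : ℕ) + k < j ∨ (j : ℕ) + k < i → A i j = 0

lemma IsBanded.mono [Zero R] {k l : ℕ} {A : Matrix (Fin n) (Fin n) R} (hA : IsBanded k A)
    (hkl : k ≤ l) : IsBanded l A :=
  fun i j hij => hA i j (by omega)

lemma isBanded_one [Zero R] [One R] (k : ℕ) : IsBanded k (1 : Matrix (Fin n) (Fin n) R) :=
  fun i j hij => one_apply_ne (by rw [ne_eq, Fin.ext_iff]; omega)

lemma IsBanded.mul [NonUnitalNonAssocSemiring R] {k l : ℕ} {A B : Matrix (Fin n) (Fin n) R}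
    (hA : IsBanded k A) (hB : IsBanded l B) : IsBanded (k + l) (A * B) := by
  intro i j hij
  rw [mul_apply]
  refine sum_eq_zero fun p _ => ?_
  by_cases hp : (i : ℕ) + k < p ∨ (p : ℕ) + k < i
  · rw [hA i p hp, zero_mul]
  · rw [hB p j (by omega), mul_zero]

lemma IsBanded.sum_col_le {k : ℕ} {A : Matrix (Fin n) (Fin n) ℝ} (hA : IsBanded k A)
    (h1 : ∀ i j, A i j ≤ 1) (j : Fin n) :
    ∑ i, A i j ≤ 2 * k + 1 := by
  set S := univ.filter fun i : Fin n => (j : ℕ) ≤ i + k ∧ (i : ℕ) ≤ j + k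
  have hsum : ∑ i, A i j ≤ #S :=
    calc ∑ i, A i j = ∑ i ∈ S, A i j :=
          (sum_filter_of_ne fun i _ hi => by_contra fun h => hi (hA i j (by omega))).symm
      _ ≤ ∑ i ∈ S, 1 := sum_le_sum fun i _ => h1 i j
      _ = #S := by simp
  have hcard : #S ≤ 2 * k + 1 := by
    calc #S ≤ #(Icc ((j : ℕ) - k) (j + k)) :=
          card_le_card_of_injOn Fin.val (fun i hi => by simp [S] at hi ⊢; omega)
            Fin.val_injective.injOn
      _ ≤ 2 * k + 1 := by simp; omega
  exact hsum.trans (by exact_mod_cast hcard)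

end Banded

lemma vecMul_dotProduct_self_le {m : Type*} [Fintype m] {P : Matrix m m ℝ} {r c : ℝ}
    (h0 : ∀ i j, 0 ≤ P i j) (hrow : ∀ i, ∑ j, P i j ≤ r)
    (hcol : ∀ j, ∑ i, P i j ≤ c) (hc : 0 ≤ c) (v : m → ℝ) :
    v ᵥ* P ⬝ᵥ v ᵥ* P ≤ c * r * (v ⬝ᵥ v) := by
  have hcol_cs : ∀ j, (v ᵥ* P) j * (v ᵥ* P) j ≤ c * ∑ i, P i j * (v i * v i) := fun j =>
    calc (v ᵥ* P) j * (v ᵥ* P) j ≤ (∑ i, P i j) * ∑ i, P i j * (v i * v i) := by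
          rw [← sq]
          exact sum_sq_le_sum_mul_sum_of_sq_le_mul _ (fun i _ => h0 i j)
            (fun i _ => mul_nonneg (h0 i j) (mul_self_nonneg _)) fun i _ => (by ring : _ = _).le
      _ ≤ c * ∑ i, P i j * (v i * v i) := mul_le_mul_of_nonneg_right (hcol j)
          (sum_nonneg fun i _ => mul_nonneg (h0 i j) (mul_self_nonneg _))
  calc v ᵥ* P ⬝ᵥ v ᵥ* P ≤ ∑ j, c * ∑ i, P i j * (v i * v i) := sum_le_sum fun j _ => hcol_cs j
    _ = c * ∑ i, (∑ j, P i j) * (v i * v i) := by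
          rw [← mul_sum, sum_comm]; simp only [sum_mul]
    _ ≤ c * ∑ i, r * (v i * v i) := by
          gcongr with i
          · exact mul_self_nonneg _
          · exact hrow i
    _ = c * r * (v ⬝ᵥ v) := by simp only [dotProduct, ← mul_sum, mul_assoc]

end Matrix

lemma lamMax_mul_transpose_le {N : ℕ} {P : Matrix (Fin N) (Fin N) ℝ} {r c : ℝ}
    (h0 : ∀ i j, 0 ≤ P i j) (hrow : ∀ i, ∑ j, P i j ≤ r) (hcol : ∀ j, ∑ i, P i j ≤ c)
    (hr : 0 ≤ r) (hc : 0 ≤ c) : lamMax (P * Pᵀ) ≤ c * r := by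
  refine Real.sSup_le (fun t ⟨v, hv, hPv⟩ => ?_) (mul_nonneg hc hr)
  have hv_pos : 0 < v ⬝ᵥ v := by simpa using dotProduct_self_star_pos_iff.mpr hv
  refine le_of_mul_le_mul_right ?_ hv_pos
  calc t * (v ⬝ᵥ v) = v ⬝ᵥ (P * Pᵀ) *ᵥ v := by rw [hPv, dotProduct_smul, smul_eq_mul]
    _ = v ᵥ* P ⬝ᵥ v ᵥ* P := by rw [← mulVec_mulVec, dotProduct_mulVec, mulVec_transpose]
    _ ≤ c * r * (v ⬝ᵥ v) := vecMul_dotProduct_self_le h0 hrow hcol hc v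

section ProdSeq

variable {N : ℕ} {M : ℕ → Matrix (Fin N) (Fin N) ℝ} {ι : ℕ}

lemma prodSeq_mem {S : Submonoid (Matrix (Fin N) (Fin N) ℝ)}
    (hM : ∀ κ, 1 ≤ κ → κ ≤ ι → M κ ∈ S) : prodSeq M ι ∈ S := by
  induction ι with
  | zero => exact S.one_mem
  | succ ι ih =>
    exact S.mul_mem (hM _ le_add_self le_rfl) (ih fun κ h1 h2 => hM κ h1 (by omega))

lemma isBanded_prodSeq {k : ℕ} (hM : ∀ κ, 1 ≤ κ → κ ≤ ι → (M κ).IsBanded k) :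
    (prodSeq M ι).IsBanded (k * ι) := by
  induction ι with
  | zero => exact isBanded_one _
  | succ ι ih =>
    rw [mul_add_one, add_comm]
    exact (hM _ le_add_self le_rfl).mul (ih fun κ h1 h2 => hM κ h1 (by omega))

end ProdSeq

section ModeMatrices

variable {n : ℕ} {θ θv θw : ℝ}

lemma sum_le_of_eq_zero_off_pair {f : Fin n → ℝ} {c : ℝ} (i : Fin n) (b : ℕ) (hb : b < n)
    (hbi : b ≠ i) (hf : ∀ j : Fin n, (j : ℕ) ≠ i → (j : ℕ) ≠ b → f j = 0)
    (h : f i + f ⟨b, hb⟩ ≤ c) : ∑ j, f j ≤ c := by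
  rwa [Fintype.sum_eq_add i ⟨b, hb⟩ (by simpa [Fin.ext_iff] using hbi.symm)
    (fun j hj => hf j (Fin.val_ne_of_ne hj.1) (by simpa [Fin.ext_iff] using hj.2))]

lemma matAFF_mem_substochastic (hn : 2 ≤ n) (h0 : 0 ≤ θ) (h1 : θ ≤ 1) :
    matAFF n θ ∈ substochastic ℝ (Fin n) := by
  refine ⟨fun i j => ?_, fun i => ?_⟩
  · simp only [matAFF, of_apply]; split_ifs <;> linarith
  -- row `0` is `e₀`, so its second column is an arbitrary zero entry
  refine sum_le_of_eq_zero_off_pair i (if (i : ℕ) = 0 then 1 else i - 1) (by split_ifs <;> omega)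
    (by split_ifs <;> omega) (fun j hji hjb => ?_) ?_
  · simp only [matAFF, of_apply, Fin.ext_iff]; split_ifs at hjb ⊢ <;> first | rfl | (exfalso; omega)
  · simp only [matAFF, of_apply, Fin.ext_iff]
    split_ifs <;> first | linarith | (exfalso; omega) | simp_all

lemma matACC_mem_substochastic (hn : 2 ≤ n) (h0 : 0 ≤ θ) (h1 : θ ≤ 1) :
    matACC n θ ∈ substochastic ℝ (Fin n) := by
  refine ⟨fun i j => ?_, fun i => ?_⟩
  · simp only [matACC, of_apply]; split_ifs <;> linarith
  refine sum_le_of_eq_zero_off_pair i (if (i : ℕ) = n - 1 then n - 2 else i + 1)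
    (by split_ifs <;> omega) (by split_ifs <;> omega) (fun j hji hjb => ?_) ?_
  · simp only [matACC, of_apply, Fin.ext_iff]; split_ifs at hjb ⊢ <;> first | rfl | (exfalso; omega)
  · simp only [matACC, of_apply, Fin.ext_iff]; split_ifs <;> first | linarith | (exfalso; omega)

lemma matACF_mem_substochastic {s : ℕ} (hs : 1 ≤ s) (hsn : s ≤ n - 1) (hv0 : 0 ≤ θv)
    (hv1 : θv ≤ 1) (hw0 : 0 ≤ θw) (hw1 : θw ≤ 1) :
    matACF n s θv θw ∈ substochastic ℝ (Fin n) := by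
  refine ⟨fun i j => ?_, fun i => ?_⟩
  · simp only [matACF, of_apply]; split_ifs <;> linarith
  refine sum_le_of_eq_zero_off_pair i (if (i : ℕ) < s then i + 1 else i - 1)
    (by split_ifs <;> omega) (by split_ifs <;> omega) (fun j hji hjb => ?_) ?_
  · simp only [matACF, of_apply, Fin.ext_iff]; split_ifs at hjb ⊢ <;> first | rfl | (exfalso; omega)
  · simp only [matACF, of_apply, Fin.ext_iff]; split_ifs <;> first | linarith | (exfalso; omega)

lemma mem_substochastic_of_mem_setAO (hn : 2 ≤ n) (hv0 : 0 ≤ θv) (hv1 : θv ≤ 1) (hw0 : 0 ≤ θw)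
    (hw1 : θw ≤ 1) {A : Matrix (Fin n) (Fin n) ℝ} (hA : A ∈ setAO n θv θw) :
    A ∈ substochastic ℝ (Fin n) := by
  rcases hA with (rfl | rfl) | ⟨s, hs, hsn, rfl⟩
  · exact matAFF_mem_substochastic hn hv0 hv1
  · exact matACC_mem_substochastic hn hw0 hw1
  · exact matACF_mem_substochastic hs hsn hv0 hv1 hw0 hw1

lemma isBanded_of_mem_setAO {A : Matrix (Fin n) (Fin n) ℝ} (hA : A ∈ setAO n θv θw) :
    A.IsBanded 1 := by
  intro i j hij
  rcases hA with (rfl | rfl) | ⟨s, hs, hsn, rfl⟩ <;>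
    simp only [matAFF, matACC, matACF, of_apply, Fin.ext_iff] <;>
    split_ifs <;> first | rfl | (exfalso; omega)

end ModeMatrices

theorem stmt15_general
    (n : ℕ) (hn : 2 ≤ n)
    (Δt Δx vm w : ℝ) (hΔt : 0 < Δt) (hΔx : 0 < Δx) (hvm : 0 < vm) (hw : 0 < w)
    (hv1 : vm * Δt / Δx < 1) (hw1 : w * Δt / Δx < 1)
    (ι : ℕ)
    (M : ℕ → Matrix (Fin n) (Fin n) ℝ)
    (hM : ∀ κ, 1 ≤ κ → κ ≤ ι → M κ ∈ setAO n (vm * Δt / Δx) (w * Δt / Δx)) :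
    (∀ r c : Fin n, 0 ≤ prodSeq M ι r c ∧ prodSeq M ι r c ≤ 1) ∧
    (∀ r c : Fin n, (r : ℕ) + (ι + 1) < (c : ℕ) ∨ (c : ℕ) + (ι + 1) < (r : ℕ) →
      prodSeq M ι r c = 0) ∧
    (∀ r : Fin n, (prodSeq M ι * (prodSeq M ι)ᵀ) r r ≤ 2 * (ι : ℝ) + 1) ∧
    lamMax (prodSeq M ι * (prodSeq M ι)ᵀ) < 2 * (2 * (ι : ℝ) + 1) := by
  set P := prodSeq M ι
  have hP : P ∈ substochastic ℝ (Fin n) := prodSeq_mem fun κ h1 h2 =>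
    mem_substochastic_of_mem_setAO hn (by positivity) hv1.le (by positivity) hw1.le (hM κ h1 h2)
  have hband : P.IsBanded ι := by
    simpa using isBanded_prodSeq fun κ h1 h2 => isBanded_of_mem_setAO (hM κ h1 h2)
  have hle : ∀ r c, P r c ≤ 1 := le_one_of_mem_substochastic hP
  have hι0 : (0 : ℝ) ≤ ι := ι.cast_nonneg
  refine ⟨fun r c => ⟨hP.1 r c, hle r c⟩, fun r c => (hband.mono ι.le_succ) r c,
    fun r => (mul_transpose_apply_self_le_one hP r).trans (by linarith), ?_⟩
  calc lamMax (P * Pᵀ) ≤ (2 * ι + 1) * 1 :=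
        lamMax_mul_transpose_le hP.1 hP.2 (hband.sum_col_le hle) zero_le_one (by positivity)
    _ < 2 * (2 * ι + 1) := by linarith

/-- entrywise and spectral bounds for products of observable-mode
matrices: entries in `[0,1]`, bandwidth `ι+1`, diagonal entries of `PPᵀ` at most
`2ι+1`, and `λ_max(PPᵀ) = σ_max(P)² < 2(2ι+1)`. -/
theorem stmt15
    (n : ℕ) (hn : 2 ≤ n)
    (Δt Δx vm w : ℝ) (hΔt : 0 < Δt) (hΔx : 0 < Δx) (hvm : 0 < vm) (hw : 0 < w)
    (hv1 : vm * Δt / Δx < 1) (hw1 : w * Δt / Δx < 1)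
    (ι : ℕ) (hι : 1 ≤ ι)
    (M : ℕ → Matrix (Fin n) (Fin n) ℝ)
    (hM : ∀ κ, 1 ≤ κ → κ ≤ ι → M κ ∈ setAO n (vm * Δt / Δx) (w * Δt / Δx)) :
    (∀ r c : Fin n, 0 ≤ prodSeq M ι r c ∧ prodSeq M ι r c ≤ 1) ∧
    (∀ r c : Fin n, (r : ℕ) + (ι + 1) < (c : ℕ) ∨ (c : ℕ) + (ι + 1) < (r : ℕ) →
      prodSeq M ι r c = 0) ∧
    (∀ r : Fin n, (prodSeq M ι * (prodSeq M ι)ᵀ) r r ≤ 2 * (ι : ℝ) + 1) ∧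
    lamMax (prodSeq M ι * (prodSeq M ι)ᵀ) < 2 * (2 * (ι : ℝ) + 1) :=
  stmt15_general n hn Δt Δx vm w hΔt hΔx hvm hw hv1 hw1 ι M hM
end
end
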